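/- Let r : ℂ → ℂ be a rational function in one variable mapping the unit circle into itself (wherever defined). Then there exist m ≥ 0, a constant c ∈ ℂ with |c| = 1, an integer t, and complex numbers α₁,…,α_m such that r(z) = c · z^t · ∏_{k=1}^m (z − α_k)/(1 − conj(α_k)·z). -/

import Mathlib

open Polynomial Complex


lemma circle_infinite : {z : ℂ | ‖z‖ = 1}.Infinite := by
  have hinj : Set.InjOn (fun t : ℝ => Complex.exp (t * Complex.I)) (Set.Ico 0 (2 * Real.pi)) := by
    intro s hs t ht hst
    rw [Complex.exp_eq_exp_iff_exists_int] at hst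
    obtain ⟨n, hn⟩ := hst
    have : (s : ℂ) = t + n * (2 * Real.pi) := by
      have hI : (Complex.I : ℂ) ≠ 0 := Complex.I_ne_zero
      apply mul_right_cancel₀ hI
      rw [hn]; ring
    have hs' : s = t + n * (2 * Real.pi) := by exact_mod_cast this
    have hpi := Real.pi_pos
    have : n = 0 := by
      rcases lt_trichotomy (n:ℤ) 0 with h | h | h
      · exfalso; nlinarith [hs.1, hs.2, ht.1, ht.2, (by exact_mod_cast h : (n:ℝ) < 0),
          (show (n:ℝ)+1 ≤ 0 by exact_mod_cast Int.add_one_le_iff.mpr h)]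
      · exact h
      · exfalso; nlinarith [hs.1, hs.2, ht.1, ht.2,
          (by exact_mod_cast Int.lt_iff_add_one_le.mp h : (1:ℝ) ≤ n)]
    rw [hs', this]; push_cast; ring
  have h1 : (Set.Ico (0:ℝ) (2 * Real.pi)).Infinite := Set.Ico_infinite (by positivity)
  have h2 := (h1.image hinj)
  apply h2.mono
  rintro z ⟨t, _, rfl⟩
  simp [Complex.norm_exp]

lemma eval_rev (f : Polynomial ℂ) (z : ℂ) (hz : z ≠ 0) :
    (Polynomial.reverse f).eval z = f.eval z⁻¹ * z ^ f.natDegree := by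
  have : Invertible (z⁻¹) := invertibleOfNonzero (inv_ne_zero hz)
  have h := Polynomial.eval₂_reverse_mul_pow (RingHom.id ℂ) (z⁻¹) f
  rw [invOf_eq_inv, inv_inv] at h
  have h2 : eval z f.reverse * z⁻¹ ^ f.natDegree = eval z⁻¹ f := h
  field_simp at h2
  rw [one_div] at h2
  rw [← h2, inv_pow, inv_mul_cancel_right₀ (pow_ne_zero _ hz)]

lemma eval_map_conj (f : Polynomial ℂ) (z : ℂ) :
    (f.map (starRingEnd ℂ)).eval ((starRingEnd ℂ) z) = (starRingEnd ℂ) (f.eval z) := by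
  rw [Polynomial.eval_map, Polynomial.eval₂_at_apply]

lemma key_id (p q : Polynomial ℂ)
    (hfin : {z : ℂ | ‖z‖ = 1 ∧
      ‖p.eval z‖ ≠ ‖q.eval z‖}.Finite) :
    p * (p.map (starRingEnd ℂ)).reverse * X ^ q.natDegree
      = q * (q.map (starRingEnd ℂ)).reverse * X ^ p.natDegree := by
  apply Polynomial.eq_of_infinite_eval_eq
  apply Set.Infinite.mono ?_ ((circle_infinite.diff hfin))
  rintro z ⟨hz1, hz2⟩
  simp only [Set.mem_setOf_eq, not_and, not_not] at hz1 hz2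
  have habs : ‖p.eval z‖ = ‖q.eval z‖ := hz2 hz1
  have hz0 : z ≠ 0 := by intro h; rw [h] at hz1; simp at hz1
  have hzc : (starRingEnd ℂ) z = z⁻¹ := by
    field_simp
    rw [mul_comm, Complex.mul_conj]
    norm_cast
    rw [← Complex.sq_norm, hz1]; norm_num
  have hrev : ∀ f : Polynomial ℂ,
      ((f.map (starRingEnd ℂ)).reverse).eval z
        = (starRingEnd ℂ) (f.eval z) * z ^ (f.map (starRingEnd ℂ)).natDegree := by
    intro f
    rw [eval_rev _ _ hz0, ← hzc, eval_map_conj]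
  have hdeg : ∀ f : Polynomial ℂ, (f.map (starRingEnd ℂ)).natDegree = f.natDegree := fun f =>
    Polynomial.natDegree_map_eq_of_injective (RingHom.injective _) f
  simp only [Set.mem_setOf_eq, eval_mul, eval_pow, eval_X, hrev, hdeg]
  have hnorm : p.eval z * (starRingEnd ℂ) (p.eval z) = q.eval z * (starRingEnd ℂ) (q.eval z) := by
    rw [Complex.mul_conj, Complex.mul_conj]
    norm_cast
    rw [← Complex.sq_norm, ← Complex.sq_norm, habs]
  linear_combination (z ^ (p.natDegree + q.natDegree)) * hnorm

lemma root_pair (p q : Polynomial ℂ)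
    (hfin : {z : ℂ | ‖z‖ = 1 ∧
      ‖p.eval z‖ ≠ ‖q.eval z‖}.Finite)
    (γ : ℂ) (hγ : γ ≠ 0) (h0 : q.eval γ = 0) :
    p.eval γ = 0 ∨ p.eval (((starRingEnd ℂ) γ)⁻¹) = 0 := by
  have E := key_id p q hfin
  have hE := congrArg (Polynomial.eval γ) E
  simp only [eval_mul, eval_pow, eval_X, h0, zero_mul] at hE
  rcases mul_eq_zero.mp hE with h | h
  · rcases mul_eq_zero.mp h with h | h
    · exact Or.inl h
    · right
      rw [eval_rev _ _ hγ] at h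
      rcases mul_eq_zero.mp h with h | h
      · have : (starRingEnd ℂ) (p.eval ((starRingEnd ℂ) γ⁻¹)) = 0 := by
          rw [← eval_map_conj]; simpa using h
        have h2 := congrArg (starRingEnd ℂ) this
        simp only [RingHomCompTriple.comp_apply, map_zero] at h2
        rw [show ((starRingEnd ℂ) γ)⁻¹ = (starRingEnd ℂ) γ⁻¹ by rw [map_inv₀]]
        simpa using h2
      · exact absurd h (pow_ne_zero _ (by simpa using hγ))
  · exact absurd h (pow_ne_zero _ hγ)

lemma base_case (p : Polynomial ℂ) (b : ℂ) (hb : b ≠ 0) (hp : p ≠ 0)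
    (hfin : {z : ℂ | ‖z‖ = 1 ∧
      ‖p.eval z‖ ≠ ‖(Polynomial.C b).eval z‖}.Finite) :
    p = Polynomial.C p.leadingCoeff * X ^ p.natDegree := by
  have E := key_id p (Polynomial.C b) hfin
  simp only [Polynomial.natDegree_C, pow_zero, mul_one, Polynomial.map_C,
    Polynomial.reverse_C] at E
  have hroots : ∀ β ∈ p.roots, β = 0 := by
    intro β hβ
    have hβ0 : p.eval β = 0 := (Polynomial.mem_roots hp).mp hβ
    have := congrArg (Polynomial.eval β) E
    simp only [eval_mul, eval_pow, eval_X, eval_C, hβ0, zero_mul] at this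
    have hbb : b * (starRingEnd ℂ) b ≠ 0 := mul_ne_zero hb (by simpa using hb)
    have : β ^ p.natDegree = 0 := by
      rcases mul_eq_zero.mp this.symm with h | h
      · exact absurd h hbb
      · exact h
    exact (pow_eq_zero_iff'.mp this).1
  have hcard : p.roots.card = p.natDegree :=
    Polynomial.splits_iff_card_roots.mp (IsAlgClosed.splits p)
  have hprod := Polynomial.C_leadingCoeff_mul_prod_multiset_X_sub_C hcard
  have hrep : p.roots.map (fun a => X - Polynomial.C a)
      = Multiset.replicate p.natDegree X := by
    rw [← hcard, ← Multiset.card_map (fun a => X - Polynomial.C a) p.roots]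
    apply Multiset.eq_replicate_of_mem
    intro x hx
    obtain ⟨β, hβ, rfl⟩ := Multiset.mem_map.mp hx
    rw [hroots β hβ]; simp
  conv_lhs => rw [← hprod]
  rw [hrep, Multiset.prod_replicate]

lemma main_base (p q : Polynomial ℂ) (hp : p ≠ 0) (hq : q ≠ 0) (hq0 : q.natDegree = 0)
    (hfin : {z : ℂ | ‖z‖ = 1 ∧
      ‖p.eval z‖ ≠ ‖q.eval z‖}.Finite) :
    ∃ (m : ℕ) (c : ℂ) (t : ℤ) (α : Fin m → ℂ), ‖c‖ = 1 ∧
      ∀ z : ℂ, z ≠ 0 → Polynomial.eval z q ≠ 0 →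
        (∀ k, 1 - (starRingEnd ℂ) (α k) * z ≠ 0) →
        Polynomial.eval z p / Polynomial.eval z q =
          c * z ^ t * ∏ k, (z - α k) / (1 - (starRingEnd ℂ) (α k) * z) := by
  have hqC : q = Polynomial.C (q.coeff 0) := Polynomial.eq_C_of_natDegree_eq_zero hq0
  set b := q.coeff 0 with hbdef
  have hb : b ≠ 0 := fun h => hq (by rw [hqC, h, map_zero])
  rw [hqC] at hfin
  obtain ⟨a, k, ha, hpC⟩ : ∃ a k, a ≠ 0 ∧ p = Polynomial.C a * X ^ k :=
    ⟨p.leadingCoeff, p.natDegree, Polynomial.leadingCoeff_ne_zero.mpr hp,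
      base_case p b hb hp hfin⟩
  have hpe : ∀ z : ℂ, p.eval z = a * z ^ k := by intro z; rw [hpC]; simp
  obtain ⟨z₀, hz₀⟩ := (circle_infinite.diff hfin).nonempty
  simp only [Set.mem_diff, Set.mem_setOf_eq, not_and, not_not] at hz₀
  have habs : ‖a‖ = ‖b‖ := by
    have h1 := hz₀.2 hz₀.1
    rw [Polynomial.eval_C, hpe z₀] at h1
    rwa [norm_mul, norm_pow, hz₀.1, one_pow, mul_one] at h1
  refine ⟨0, a / b, (k : ℤ), Fin.elim0, ?_, ?_⟩
  · rw [norm_div, habs, div_self (by simpa using hb)]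
  · intro z hz hqz _
    rw [hqC, Polynomial.eval_C, hpe z]
    rw [Finset.univ_eq_empty, Finset.prod_empty, mul_one, zpow_natCast]
    ring

lemma main_ind (n : ℕ) : ∀ (p q : Polynomial ℂ), p ≠ 0 → q ≠ 0 → q.natDegree ≤ n →
    {z : ℂ | ‖z‖ = 1 ∧
      ‖p.eval z‖ ≠ ‖q.eval z‖}.Finite →
    ∃ (m : ℕ) (c : ℂ) (t : ℤ) (α : Fin m → ℂ), ‖c‖ = 1 ∧
      ∀ z : ℂ, z ≠ 0 → Polynomial.eval z q ≠ 0 →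
        (∀ k, 1 - (starRingEnd ℂ) (α k) * z ≠ 0) →
        Polynomial.eval z p / Polynomial.eval z q =
          c * z ^ t * ∏ k, (z - α k) / (1 - (starRingEnd ℂ) (α k) * z) := by
  induction n with
  | zero =>
    intro p q hp hq hdeg hfin
    exact main_base p q hp hq (Nat.le_zero.mp hdeg) hfin
  | succ n ih =>
    intro p q hp hq hdeg hfin
    rcases eq_or_ne q.natDegree 0 with hq0 | hq0
    · exact main_base p q hp hq hq0 hfin
    · -- q has a root γ
      obtain ⟨γ, hγroot⟩ : ∃ γ, q.IsRoot γ := by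
        have : 0 < q.degree := Polynomial.natDegree_pos_iff_degree_pos.mp (Nat.pos_of_ne_zero hq0)
        exact Complex.exists_root this
      obtain ⟨q₁, hq₁⟩ : (X - Polynomial.C γ) ∣ q := Polynomial.dvd_iff_isRoot.mpr hγroot
      have hq₁0 : q₁ ≠ 0 := by rintro rfl; rw [mul_zero] at hq₁; exact hq hq₁
      have hdeg₁ : q₁.natDegree ≤ n := by
        have := Polynomial.natDegree_mul (Polynomial.X_sub_C_ne_zero γ) hq₁0
        rw [← hq₁, Polynomial.natDegree_X_sub_C] at this
        omega
      have hqe : ∀ z, q.eval z = (z - γ) * q₁.eval z := by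
        intro z; rw [hq₁]; simp
      rcases eq_or_ne γ 0 with rfl | hγ
      · -- γ = 0 : factor out X
        have hsub : {z : ℂ | ‖z‖ = 1 ∧
            ‖p.eval z‖ ≠ ‖q₁.eval z‖} ⊆
            {z : ℂ | ‖z‖ = 1 ∧
            ‖p.eval z‖ ≠ ‖q.eval z‖} := by
          rintro z ⟨h1, h2⟩
          refine ⟨h1, ?_⟩
          rw [hqe z, norm_mul, sub_zero, h1, one_mul]
          exact h2
        obtain ⟨m, c, t, α, hc, heq⟩ := ih p q₁ hp hq₁0 hdeg₁ (hfin.subset hsub)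
        refine ⟨m, c, t - 1, α, hc, ?_⟩
        intro z hz hqz hk
        have hq₁z : q₁.eval z ≠ 0 := by
          intro h; apply hqz; rw [hqe z, h, mul_zero]
        have h1 := heq z hz hq₁z hk
        rw [div_eq_iff hq₁z] at h1
        rw [hqe z, sub_zero, h1, zpow_sub_one₀ hz,
          mul_div_mul_right _ _ hq₁z, div_eq_mul_inv]
        ring
      · -- γ ≠ 0
        rcases root_pair p q hfin γ hγ hγroot with hpγ | hpδ
        · -- common factor (X - γ)
          obtain ⟨p₁, hp₁⟩ : (X - Polynomial.C γ) ∣ p := Polynomial.dvd_iff_isRoot.mpr hpγ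
          have hp₁0 : p₁ ≠ 0 := by rintro rfl; rw [mul_zero] at hp₁; exact hp hp₁
          have hpe : ∀ z, p.eval z = (z - γ) * p₁.eval z := by
            intro z; rw [hp₁]; simp
          have hsub : {z : ℂ | ‖z‖ = 1 ∧
              ‖p₁.eval z‖ ≠ ‖q₁.eval z‖} ⊆
              {z : ℂ | ‖z‖ = 1 ∧
              ‖p.eval z‖ ≠ ‖q.eval z‖} ∪ {γ} := by
            rintro z ⟨h1, h2⟩
            rcases eq_or_ne z γ with rfl | hzγ
            · exact Or.inr rfl
            · refine Or.inl ⟨h1, ?_⟩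
              rw [hqe z, hpe z, norm_mul, norm_mul]
              intro h
              exact h2 (mul_left_cancel₀ (by
                simpa [sub_eq_zero] using hzγ : ‖z - γ‖ ≠ 0) h)
          obtain ⟨m, c, t, α, hc, heq⟩ := ih p₁ q₁ hp₁0 hq₁0 hdeg₁
            ((hfin.union (Set.finite_singleton γ)).subset hsub)
          refine ⟨m, c, t, α, hc, ?_⟩
          intro z hz hqz hk
          have hzγ : z - γ ≠ 0 := by
            intro h; apply hqz; rw [hqe z, h, zero_mul]
          have hq₁z : q₁.eval z ≠ 0 := by
            intro h; apply hqz; rw [hqe z, h, mul_zero]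
          rw [hqe z, hpe z, mul_div_mul_left _ _ hzγ]
          exact heq z hz hq₁z hk
        · -- Blaschke factor case
          set δ : ℂ := ((starRingEnd ℂ) γ)⁻¹ with hδdef
          have hδ : δ ≠ 0 := inv_ne_zero (by simpa using hγ)
          obtain ⟨p₁, hp₁⟩ : (X - Polynomial.C δ) ∣ p := Polynomial.dvd_iff_isRoot.mpr hpδ
          have hp₁0 : p₁ ≠ 0 := by rintro rfl; rw [mul_zero] at hp₁; exact hp hp₁
          have hpe : ∀ z, p.eval z = (z - δ) * p₁.eval z := by
            intro z; rw [hp₁]; simp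
          set q₂ : Polynomial ℂ := Polynomial.C γ * q₁ with hq₂def
          have hq₂0 : q₂ ≠ 0 := mul_ne_zero (by simpa using hγ) hq₁0
          have hdeg₂ : q₂.natDegree ≤ n := by
            rw [hq₂def, Polynomial.natDegree_C_mul hγ]; exact hdeg₁
          have hγc : (starRingEnd ℂ) γ ≠ 0 := by simpa using hγ
          have hblaschke : ∀ z : ℂ, ‖z‖ = 1 →
              ‖z - δ‖ = ‖z - γ‖ / ‖γ‖ := by
            intro z h1
            have hzz : z * (starRingEnd ℂ) z = 1 := by
              rw [Complex.mul_conj]; norm_cast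
              rw [← Complex.sq_norm, h1]; norm_num
            have h3 : z - δ = z * ((starRingEnd ℂ) γ - (starRingEnd ℂ) z) / (starRingEnd ℂ) γ := by
              rw [hδdef]
              field_simp
              linear_combination hzz
            rw [h3, norm_div, norm_mul, h1, one_mul]
            congr 1
            · rw [show (starRingEnd ℂ) γ - (starRingEnd ℂ) z = (starRingEnd ℂ) (γ - z) by
                rw [map_sub], Complex.norm_conj, norm_sub_rev]
            · exact Complex.norm_conj γ
          have hsub : {z : ℂ | ‖z‖ = 1 ∧
              ‖p₁.eval z‖ ≠ ‖q₂.eval z‖} ⊆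
              {z : ℂ | ‖z‖ = 1 ∧
              ‖p.eval z‖ ≠ ‖q.eval z‖} ∪ {γ} := by
            rintro z ⟨h1, h2⟩
            rcases eq_or_ne z γ with rfl | hzγ
            · exact Or.inr rfl
            · refine Or.inl ⟨h1, ?_⟩
              intro h
              apply h2
              rw [hqe z, hpe z, norm_mul, norm_mul, hblaschke z h1] at h
              have hzγ' : ‖z - γ‖ ≠ 0 := by simpa [sub_eq_zero] using hzγ
              have hγ' : ‖γ‖ ≠ 0 := by simpa using hγ
              show ‖eval z p₁‖ = ‖eval z (Polynomial.C γ * q₁)‖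
              simp only [Polynomial.eval_mul, Polynomial.eval_C, norm_mul]
              field_simp at h
              exact h
          obtain ⟨m, c, t, α, hc, heq⟩ := ih p₁ q₂ hp₁0 hq₂0 hdeg₂
            ((hfin.union (Set.finite_singleton γ)).subset hsub)
          refine ⟨m + 1, -c, t, Fin.cons δ α, by simpa using hc, ?_⟩
          intro z hz hqz hk
          have hzγ : z - γ ≠ 0 := by
            intro h; apply hqz; rw [hqe z, h, zero_mul]
          have hq₁z : q₁.eval z ≠ 0 := by
            intro h; apply hqz; rw [hqe z, h, mul_zero]
          have hq₂z : q₂.eval z ≠ 0 := by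
            show (Polynomial.C γ * q₁).eval z ≠ 0
            simp only [Polynomial.eval_mul, Polynomial.eval_C]
            exact mul_ne_zero hγ hq₁z
          have hk' : ∀ k : Fin m, 1 - (starRingEnd ℂ) (α k) * z ≠ 0 := by
            intro k
            have := hk k.succ
            rwa [Fin.cons_succ] at this
          have h1 := heq z hz hq₂z hk'
          rw [div_eq_iff hq₂z] at h1
          rw [hq₂def] at h1
          simp only [Polynomial.eval_mul, Polynomial.eval_C] at h1
          have hconjδ : (starRingEnd ℂ) δ = γ⁻¹ := by
            rw [hδdef, map_inv₀, Complex.conj_conj]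
          have hden : 1 - γ⁻¹ * z ≠ 0 := by
            have := hk 0
            rwa [Fin.cons_zero, hconjδ] at this
          clear hpδ hδdef
          clear_value δ
          rw [hqe z, hpe z, h1, Fin.prod_univ_succ]
          simp only [Fin.cons_zero, Fin.cons_succ, hconjδ]
          set P := ∏ k : Fin m, (z - α k) / (1 - (starRingEnd ℂ) (α k) * z) with hP
          have hγz : -z + γ ≠ 0 := fun h => hzγ (by linear_combination -h)
          field_simp [hzγ, hγ, hq₁z, hden, hγz]
          have hinv : (-z + γ) * (-z + γ)⁻¹ = 1 := mul_inv_cancel₀ hγz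
          linear_combination (-(c * P * (z - δ))) * hinv

theorem stmt_10 (p q : Polynomial ℂ) (hq : q ≠ 0)
    (h : ∀ z : ℂ, ‖z‖ = 1 → Polynomial.eval z q ≠ 0 →
      ‖Polynomial.eval z p / Polynomial.eval z q‖ = 1) :
    ∃ (m : ℕ) (c : ℂ) (t : ℤ) (α : Fin m → ℂ), ‖c‖ = 1 ∧
      ∀ z : ℂ, z ≠ 0 → Polynomial.eval z q ≠ 0 →
        (∀ k, 1 - (starRingEnd ℂ) (α k) * z ≠ 0) →
        Polynomial.eval z p / Polynomial.eval z q =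
          c * z ^ t * ∏ k, (z - α k) / (1 - (starRingEnd ℂ) (α k) * z) := by
  have hfin : {z : ℂ | ‖z‖ = 1 ∧
      ‖p.eval z‖ ≠ ‖q.eval z‖}.Finite := by
    apply (Polynomial.finite_setOf_isRoot hq).subset
    rintro z ⟨h1, h2⟩
    by_contra hroot
    have hqz : q.eval z ≠ 0 := hroot
    have h3 := h z h1 hqz
    rw [norm_div] at h3
    have hqz' : ‖q.eval z‖ ≠ 0 := by simpa using hqz
    exact h2 ((div_eq_one_iff_eq hqz').mp h3)
  have hp : p ≠ 0 := by
    rintro rfl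
    have hsub : {z : ℂ | ‖z‖ = 1} ⊆ {x | q.IsRoot x} := by
      intro z h1
      by_contra hroot
      have h3 := h z h1 hroot
      simp at h3
    exact circle_infinite ((Polynomial.finite_setOf_isRoot hq).subset hsub)
  obtain ⟨m, c, t, α, hc, heq⟩ := main_ind q.natDegree p q hp hq le_rfl hfin
  exact ⟨m, c, t, α, hc, heq⟩
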